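/- In a prediction space, assume that for every α ∈ (0,1) the lower quantile q_α^-(F) is measurable and a regular conditional distribution of Y given q_α^-(F) exists. If the predictive distribution F is auto-calibrated, then F is CEP calibrated, i.e., Q(Z_F ≤ α | q_α^-(F)) = α almost surely for every α ∈ (0,1). -/

import Mathlib

open MeasureTheory ProbabilityTheory

noncomputable section

/-- The cumulative distribution function of a measure `G` on `ℝ`, evaluated at `y`. -/
def cdfAt (G : Measure ℝ) (y : ℝ) : ℝ := (G (Set.Iic y)).toReal

/-- The left limit `G(y−)` of the CDF of `G` at `y`. -/
def cdfLt (G : Measure ℝ) (y : ℝ) : ℝ := (G (Set.Iio y)).toReal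

/-- The lower `α`-quantile `q_α^-(G) = inf {x : G(x) ≥ α}`. -/
def lowerQuantile (G : Measure ℝ) (α : ℝ) : ℝ := sInf {x : ℝ | α ≤ cdfAt G x}

/-- The upper `α`-quantile `q_α^+(G) = sup {x : G(x−) ≤ α}`. -/
def upperQuantile (G : Measure ℝ) (α : ℝ) : ℝ := sSup {x : ℝ | cdfLt G x ≤ α}

variable {Ω : Type*} [MeasurableSpace Ω]

/-- The (randomized) probability integral transform `Z_F = F(Y−) + U (F(Y) − F(Y−))`. -/
def PIT (F : Ω → Measure ℝ) (Y U : Ω → ℝ) (ω : Ω) : ℝ :=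
  cdfLt (F ω) (Y ω) + U ω * (cdfAt (F ω) (Y ω) - cdfLt (F ω) (Y ω))

/-- The uniform distribution on `[0,1]`. -/
def unif01 : Measure ℝ := volume.restrict (Set.Icc (0:ℝ) 1)

/-- A prediction space: a probability space carrying a random probability measure `F` on `ℝ`
(the predictive distribution), an outcome `Y`, and a uniform random variable `U` that is
independent of the σ-algebra generated by `F` and `Y`. -/
structure IsPredictionSpace (μ : Measure Ω) (F : Ω → Measure ℝ) (Y U : Ω → ℝ) : Prop where
  isProb : IsProbabilityMeasure μ
  probF : ∀ ω, IsProbabilityMeasure (F ω)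
  measF : Measurable F
  measY : Measurable Y
  measU : Measurable U
  unifU : μ.map U = unif01
  indepU : Indep (MeasurableSpace.comap U inferInstance)
    (MeasurableSpace.comap F inferInstance ⊔ MeasurableSpace.comap Y inferInstance) μ

/-- `F` is auto-calibrated: `F(y) = Q(Y ≤ y | σ(F))` a.s. for every `y`. -/
def AutoCalibrated (μ : Measure Ω) (F : Ω → Measure ℝ) (Y : Ω → ℝ) : Prop :=
  ∀ y : ℝ, (fun ω => cdfAt (F ω) y)
    =ᵐ[μ] μ[Set.indicator {ω | Y ω ≤ y} (fun _ => (1:ℝ)) | MeasurableSpace.comap F inferInstance]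

/-- `F` is probabilistically calibrated: the PIT is uniform on `[0,1]`. -/
def ProbCalibrated (μ : Measure Ω) (F : Ω → Measure ℝ) (Y U : Ω → ℝ) : Prop :=
  μ.map (PIT F Y U) = unif01

/-- `F` is marginally calibrated: `E[F(y)] = Q(Y ≤ y)` for every `y`. -/
def MargCalibrated (μ : Measure Ω) (F : Ω → Measure ℝ) (Y : Ω → ℝ) : Prop :=
  ∀ y : ℝ, ∫ ω, cdfAt (F ω) y ∂μ = (μ {ω | Y ω ≤ y}).toReal

/-- `F` is CEP calibrated: `Q(Z_F ≤ α | q_α^-(F)) = α` a.s. for every `α ∈ (0,1)`. -/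
def CEPCalibrated (μ : Measure Ω) (F : Ω → Measure ℝ) (Y U : Ω → ℝ) : Prop :=
  ∀ α ∈ Set.Ioo (0:ℝ) 1,
    μ[Set.indicator {ω | PIT F Y U ω ≤ α} (fun _ => (1:ℝ)) |
      MeasurableSpace.comap (fun ω => lowerQuantile (F ω) α) inferInstance]
      =ᵐ[μ] fun _ => α

/-- `F` is threshold calibrated: `Q(Y ≤ t | F(t)) = F(t)` a.s. for every `t`. -/
def ThreshCalibrated (μ : Measure Ω) (F : Ω → Measure ℝ) (Y : Ω → ℝ) : Prop :=
  ∀ t : ℝ,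
    μ[Set.indicator {ω | Y ω ≤ t} (fun _ => (1:ℝ)) |
      MeasurableSpace.comap (fun ω => cdfAt (F ω) t) inferInstance]
      =ᵐ[μ] fun ω => cdfAt (F ω) t

/-- An identification function: measurable, increasing and left-continuous in its
first argument. -/
structure IsIdentificationFunction (V : ℝ → ℝ → ℝ) : Prop where
  meas : Measurable (Function.uncurry V)
  mono : ∀ y : ℝ, Monotone fun x => V x y
  leftCont : ∀ y x : ℝ, ContinuousWithinAt (fun x => V x y) (Set.Iic x) x

/-- Lower bound `T^-(G) = sup {x : ∫ V(x,y) dG(y) < 0}` of the functional induced by `V`. -/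
def Tminus (V : ℝ → ℝ → ℝ) (G : Measure ℝ) : ℝ := sSup {x : ℝ | ∫ y, V x y ∂G < 0}

/-- Upper bound `T^+(G) = inf {x : ∫ V(x,y) dG(y) > 0}` of the functional induced by `V`. -/
def Tplus (V : ℝ → ℝ → ℝ) (G : Measure ℝ) : ℝ := sInf {x : ℝ | 0 < ∫ y, V x y ∂G}

/-- `V` is of prediction error form `V(x,y) = v(x−y)`. -/
def PredErrorForm (V : ℝ → ℝ → ℝ) : Prop :=
  ∃ v : ℝ → ℝ, Monotone v ∧ (∀ x : ℝ, ContinuousWithinAt v (Set.Iic x) x) ∧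
    (∃ r : ℝ, 0 < r ∧ v (-r) < 0 ∧ 0 < v r) ∧ ∀ x y : ℝ, V x y = v (x - y)

/-- `V` is of the form `V(x,y) = x − T(δ_y)` for a singleton-valued functional `T`. -/
def DiracSingletonForm (V : ℝ → ℝ → ℝ) : Prop :=
  (∀ y : ℝ, Tminus V (Measure.dirac y) = Tplus V (Measure.dirac y)) ∧
  ∀ x y : ℝ, V x y = x - Tminus V (Measure.dirac y)

/-- Assumption (V): `V` induces the functional on a convex class `𝓕₀ ⊇ 𝓕` of probability
measures containing all Dirac measures, and `V` is of prediction error form or of the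
form `V(x,y) = x − T(δ_y)` for a singleton-valued `T`. -/
structure AssumptionV (V : ℝ → ℝ → ℝ) (𝓕 : Set (Measure ℝ)) : Prop where
  inducing : ∃ 𝓕₀ : Set (Measure ℝ), 𝓕 ⊆ 𝓕₀ ∧ (∀ G ∈ 𝓕₀, IsProbabilityMeasure G) ∧
    (∀ y : ℝ, Measure.dirac y ∈ 𝓕₀) ∧
    (∀ G₁ ∈ 𝓕₀, ∀ G₂ ∈ 𝓕₀, ∀ p : ℝ, 0 ≤ p → p ≤ 1 →
      ENNReal.ofReal p • G₁ + ENNReal.ofReal (1 - p) • G₂ ∈ 𝓕₀) ∧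
    ∀ G ∈ 𝓕₀, ∀ x : ℝ, Integrable (fun y => V x y) G
  form : PredErrorForm V ∨ DiracSingletonForm V

/-- The pair `(T^-(F), T^+(F))` of the interval-valued functional applied to the
random predictive distribution. -/
def TpairOf (V : ℝ → ℝ → ℝ) (F : Ω → Measure ℝ) (ω : Ω) : ℝ × ℝ :=
  (Tminus V (F ω), Tplus V (F ω))

/-- Conditional `T`-calibration of the predictive distribution `F`:
`T(L(Y | T(F))) = T(F)` almost surely. -/
def CondTCalibrated (μ : Measure Ω) [IsFiniteMeasure μ] (V : ℝ → ℝ → ℝ)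
    (F : Ω → Measure ℝ) (Y : Ω → ℝ) : Prop :=
  ∀ᵐ ω ∂μ,
    Tminus V (condDistrib Y (TpairOf V F) μ (TpairOf V F ω)) = Tminus V (F ω) ∧
    Tplus V (condDistrib Y (TpairOf V F) μ (TpairOf V F ω)) = Tplus V (F ω)

/-- Unconditional `T`-calibration of the predictive distribution `F`. -/
def UncondTCalibrated (μ : Measure Ω) (V : ℝ → ℝ → ℝ)
    (F : Ω → Measure ℝ) (Y : Ω → ℝ) : Prop :=
  ∀ ε : ℝ, 0 < ε →
    (∫ ω, V (Tplus V (F ω) - ε) (Y ω) ∂μ) ≤ 0 ∧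
    0 ≤ ∫ ω, V (Tminus V (F ω) + ε) (Y ω) ∂μ

/-- Unconditional `T`-calibration of a single-valued point forecast `X`. -/
def UncondCalibratedPt (μ : Measure Ω) (V : ℝ → ℝ → ℝ) (X Y : Ω → ℝ) : Prop :=
  ∀ ε : ℝ, 0 < ε →
    (∫ ω, V (X ω - ε) (Y ω) ∂μ) ≤ 0 ∧ 0 ≤ ∫ ω, V (X ω + ε) (Y ω) ∂μ

/-- The sets defining `T^-(G)` and `T^+(G)` are nonempty and bounded, so that the induced
functional is well defined and finite at `G`. -/
def TWellDefined (V : ℝ → ℝ → ℝ) (G : Measure ℝ) : Prop :=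
  {x : ℝ | ∫ y, V x y ∂G < 0}.Nonempty ∧ BddAbove {x : ℝ | ∫ y, V x y ∂G < 0} ∧
  {x : ℝ | 0 < ∫ y, V x y ∂G}.Nonempty ∧ BddBelow {x : ℝ | 0 < ∫ y, V x y ∂G}

/-- The elementary loss `S_η(x,y) = (1{η ≤ x} − 1{η ≤ y}) V(η,y)`. -/
def elemLoss (V : ℝ → ℝ → ℝ) (η x y : ℝ) : ℝ :=
  ((if η ≤ x then (1:ℝ) else 0) - if η ≤ y then (1:ℝ) else 0) * V η y

/-- `S` has mixture (Choquet) form with respect to the identification function `V`. -/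
def MixtureForm (V S : ℝ → ℝ → ℝ) : Prop :=
  ∃ H : Measure ℝ, IsLocallyFiniteMeasure H ∧
    ∀ x y : ℝ, S x y = ∫ η, elemLoss V η x y ∂H

/-- `S` is a canonical loss for the functional induced by `V`. -/
def IsCanonicalLoss (V S : ℝ → ℝ → ℝ) : Prop :=
  (∀ x y : ℝ, 0 ≤ S x y) ∧
  ∃ a : ℝ, 0 < a ∧ ∃ b : ℝ → ℝ, Measurable b ∧
    ∀ x y : ℝ, S x y = a * (∫ η, elemLoss V η x y) + b y

/-- `S` is a consistent scoring function for the functional induced by `V` on the class `𝓕`. -/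
def ConsistentFor (S V : ℝ → ℝ → ℝ) (𝓕 : Set (Measure ℝ)) : Prop :=
  ∀ G ∈ 𝓕, ∀ t ∈ Set.Icc (Tminus V G) (Tplus V G), ∀ x : ℝ,
    ∫ y, S t y ∂G ≤ ∫ y, S x y ∂G

/-- `S` is a strictly consistent scoring function for the functional induced by `V` on `𝓕`. -/
def StrictlyConsistentFor (S V : ℝ → ℝ → ℝ) (𝓕 : Set (Measure ℝ)) : Prop :=
  ConsistentFor S V 𝓕 ∧
  ∀ G ∈ 𝓕, ∀ t ∈ Set.Icc (Tminus V G) (Tplus V G), ∀ x : ℝ,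
    x ∉ Set.Icc (Tminus V G) (Tplus V G) → ∫ y, S t y ∂G < ∫ y, S x y ∂G

/-- The empirical distribution of the outcomes `y i`, `i ∈ s`. -/
def empOn {n : ℕ} (y : Fin n → ℝ) (s : Finset (Fin n)) : Measure ℝ :=
  (s.card : ENNReal)⁻¹ • ∑ i ∈ s, Measure.dirac (y i)

/-- A locally bounded real function of a real variable. -/
def LocallyBdd (f : ℝ → ℝ) : Prop :=
  ∀ η₀ : ℝ, ∃ ε : ℝ, 0 < ε ∧ ∃ C : ℝ, ∀ η : ℝ, |η - η₀| < ε → |f η| ≤ C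

/-- All CDFs in the class `𝓕` are continuous and strictly increasing on a shared
support interval. -/
def CSI (𝓕 : Set (Measure ℝ)) : Prop :=
  ∃ S : Set ℝ, S.Nonempty ∧ S.OrdConnected ∧ ∀ G ∈ 𝓕,
    Continuous (cdfAt G) ∧ StrictMonoOn (cdfAt G) S ∧ G Sᶜ = 0

/-- The conditioning variable for quantile calibration at level `α`: the interval of
`α`-quantiles, represented by its endpoints. -/
def qPairOf (F : Ω → Measure ℝ) (α : ℝ) (ω : Ω) : ℝ × ℝ :=
  (lowerQuantile (F ω) α, upperQuantile (F ω) α)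

/-- `F` is quantile calibrated: for every `α ∈ (0,1)`,
`q_α(L(Y | q_α(F))) = q_α(F)` almost surely. -/
def QuantileCalibrated (μ : Measure Ω) [IsFiniteMeasure μ]
    (F : Ω → Measure ℝ) (Y : Ω → ℝ) : Prop :=
  ∀ α ∈ Set.Ioo (0:ℝ) 1, ∀ᵐ ω ∂μ,
    lowerQuantile (condDistrib Y (qPairOf F α) μ (qPairOf F α ω)) α
      = lowerQuantile (F ω) α ∧
    upperQuantile (condDistrib Y (qPairOf F α) μ (qPairOf F α ω)) α
      = upperQuantile (F ω) α

/-!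
Auto-calibration says that the joint law of `(F, Y)` is `law(F) ⊗ (G ↦ G)`. As `U` is uniform and
independent of `(F, Y)`, conditionally on `F = G` the PIT `Z` is the randomized PIT of a
`G`-distributed outcome, and that is uniform: with `q = q_α^-(G)`, `Z ≤ α` holds when `Y < q`, and
when `Y = q` with conditional probability `(α - G(q−)) / G({q})`, so `P(Z ≤ α) ≥ α`; the same split
at `q_β^-(G)` gives `P(Z < β) ≤ β`, and `β ↓ α` closes the gap. Hence `Q(Z_F ≤ α | F) = α`, which
survives conditioning on `q_α^-(F)`, a measurable function of `F`.
-/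

open Set Filter
open scoped ENNReal

section Quantile

variable {G : Measure ℝ} [IsProbabilityMeasure G] {α : ℝ}

lemma cdfAt_eq_cdf : cdfAt G = cdf G :=
  funext fun y => (cdf_eq_real G y).symm

lemma lowerQuantile_le_iff (hα : α ∈ Ioo (0:ℝ) 1) {t : ℝ} :
    lowerQuantile G α ≤ t ↔ α ≤ cdfAt G t := by
  rw [lowerQuantile, cdfAt_eq_cdf]
  have hne : {x | α ≤ cdf G x}.Nonempty :=
    ((tendsto_cdf_atTop G).eventually (eventually_ge_nhds hα.2)).exists
  have hbdd : BddBelow {x | α ≤ cdf G x} := by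
    obtain ⟨b, hb⟩ :=
      ((tendsto_cdf_atBot G).eventually (eventually_lt_nhds hα.1)).exists_forall_of_atBot
    exact ⟨b, fun x hx => le_of_not_gt fun hxb => (hb x hxb.le).not_ge hx⟩
  refine ⟨fun h => ?_, fun h => csInf_le hbdd h⟩
  refine ge_of_tendsto ((cdf G).right_continuous t |>.mono Ioi_subset_Ici_self)
    (eventually_nhdsWithin_of_forall fun t' ht' => ?_)
  obtain ⟨z, hz, hzt'⟩ := (csInf_lt_iff hbdd hne).mp (h.trans_lt ht')
  exact hz.trans (monotone_cdf G hzt'.le)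

lemma cdfAt_lt_of_lt_lowerQuantile (hα : α ∈ Ioo (0:ℝ) 1) {y : ℝ} (hy : y < lowerQuantile G α) :
    cdfAt G y < α :=
  lt_of_not_ge fun h => hy.not_ge ((lowerQuantile_le_iff hα).mpr h)

lemma le_cdfAt_lowerQuantile (hα : α ∈ Ioo (0:ℝ) 1) : α ≤ cdfAt G (lowerQuantile G α) :=
  (lowerQuantile_le_iff hα).mp le_rfl

lemma cdfLt_lowerQuantile_le (hα : α ∈ Ioo (0:ℝ) 1) : cdfLt G (lowerQuantile G α) ≤ α := by
  set q := lowerQuantile G α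
  have hleft : cdfLt G q = Function.leftLim (cdf G) q := by
    have h := (cdf G).measure_Iio (tendsto_cdf_atBot G) q
    rw [measure_cdf, sub_zero] at h
    rw [cdfLt, h, ENNReal.toReal_ofReal]
    exact (cdf_nonneg G _).trans ((monotone_cdf G).le_leftLim (sub_one_lt q))
  rw [hleft, (monotone_cdf G).leftLim_eq_sSup]
  refine csSup_le (nonempty_Iio.image _) ?_
  rintro _ ⟨y, hy, rfl⟩
  exact (cdfAt_eq_cdf (G := G) ▸ cdfAt_lt_of_lt_lowerQuantile hα hy).le

end Quantile

lemma measurable_lowerQuantile_comp {Ω : Type*} {m : MeasurableSpace Ω} {F : Ω → Measure ℝ}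
    [∀ ω, IsProbabilityMeasure (F ω)] (hF : Measurable F) {α : ℝ} (hα : α ∈ Ioo (0:ℝ) 1) :
    Measurable fun ω => lowerQuantile (F ω) α := by
  refine measurable_of_Iic fun t => ?_
  have hset : (fun ω => lowerQuantile (F ω) α) ⁻¹' Iic t
      = F ⁻¹' {G | ENNReal.ofReal α ≤ G (Iic t)} := by
    ext ω
    simp only [mem_preimage, mem_Iic, mem_ofPred_eq, lowerQuantile_le_iff hα, cdfAt,
      ENNReal.ofReal_le_iff_le_toReal (measure_ne_top _ _)]
  rw [hset]
  exact hF (measurableSet_le measurable_const (Measure.measurable_coe measurableSet_Iic))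

instance : IsProbabilityMeasure unif01 :=
  ⟨by simp [unif01, Real.volume_Icc]⟩

lemma unif01_Icc : unif01 (Icc 0 1) = 1 := by
  simp [unif01, Real.volume_Icc]

lemma unif01_compl_Icc : unif01 (Icc 0 1)ᶜ = 0 :=
  (prob_compl_eq_zero_iff measurableSet_Icc).mpr unif01_Icc

lemma ofReal_add_unif01_mul {a j α : ℝ} (ha : 0 ≤ a) (haα : a ≤ α) (hαj : α ≤ a + j) :
    ENNReal.ofReal a + unif01 {u | a + u * j ≤ α} * ENNReal.ofReal j = ENNReal.ofReal α := by
  rcases (show 0 ≤ j by linarith).eq_or_lt with rfl | hj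
  · rw [le_antisymm haα (by simpa using hαj), ENNReal.ofReal_zero, mul_zero, add_zero]
  set c := (α - a) / j
  have hc : c ∈ Icc (0:ℝ) 1 :=
    ⟨div_nonneg (by linarith) hj.le, (div_le_one hj).mpr (by linarith)⟩
  have hset : {u | a + u * j ≤ α} ∩ Icc 0 1 = Icc 0 c := by
    ext u
    simp only [mem_inter_iff, mem_ofPred_eq, mem_Icc, c, le_div_iff₀ hj]
    constructor
    · rintro ⟨h, h0, -⟩
      exact ⟨h0, by linarith⟩
    · rintro ⟨h0, h⟩
      exact ⟨by linarith, h0, le_of_mul_le_mul_right (by linarith) hj⟩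
  rw [unif01, Measure.restrict_apply' measurableSet_Icc, hset, Real.volume_Icc, sub_zero,
    ← ENNReal.ofReal_mul hc.1, ← ENNReal.ofReal_add ha (by positivity), div_mul_cancel₀ _ hj.ne',
    add_sub_cancel]

def pitAt (G : Measure ℝ) (y u : ℝ) : ℝ := cdfLt G y + u * (cdfAt G y - cdfLt G y)

lemma measurable_pitAt (G : Measure ℝ) : Measurable fun p : ℝ × ℝ => pitAt G p.1 p.2 := by
  have hAt : Monotone fun y => G (Iic y) := fun _ _ h => measure_mono (Iic_subset_Iic.mpr h)
  have hLt : Monotone fun y => G (Iio y) := fun _ _ h => measure_mono (Iio_subset_Iio h)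
  replace hAt : Measurable (cdfAt G) := hAt.measurable.ennreal_toReal
  replace hLt : Measurable (cdfLt G) := hLt.measurable.ennreal_toReal
  exact (hLt.comp measurable_fst).add
    (measurable_snd.mul ((hAt.comp measurable_fst).sub (hLt.comp measurable_fst)))

lemma lintegral_indicator_Iio_add_indicator_singleton (G : Measure ℝ) (q : ℝ) (c : ℝ≥0∞) :
    ∫⁻ y, (Iio q).indicator 1 y + ({q} : Set ℝ).indicator (fun _ => c) y ∂G
      = G (Iio q) + c * G {q} := by
  rw [lintegral_add_left (measurable_one.indicator measurableSet_Iio),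
    lintegral_indicator_one measurableSet_Iio,
    lintegral_indicator_const (measurableSet_singleton q)]

section PITOfFixedDistribution

variable {G : Measure ℝ} [IsProbabilityMeasure G] {α : ℝ}

lemma cdfLt_le_cdfAt (y : ℝ) : cdfLt G y ≤ cdfAt G y :=
  ENNReal.toReal_mono (measure_ne_top _ _) (measure_mono Iio_subset_Iic_self)

lemma measure_Iio_add_unif01_mul_measure_singleton (hα : α ∈ Ioo (0:ℝ) 1) :
    G (Iio (lowerQuantile G α)) + unif01 {u | pitAt G (lowerQuantile G α) u ≤ α}
      * G {lowerQuantile G α} = ENNReal.ofReal α := by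
  set q := lowerQuantile G α
  have hsplit : G (Iic q) = G (Iio q) + G {q} := by
    rw [← Iio_union_right, measure_union (by simp : Disjoint (Iio q) {q})
      (measurableSet_singleton q)]
  have hatom : G {q} = ENNReal.ofReal (cdfAt G q - cdfLt G q) := by
    rw [cdfAt, cdfLt, hsplit, ENNReal.toReal_add (measure_ne_top _ _) (measure_ne_top _ _),
      add_sub_cancel_left, ENNReal.ofReal_toReal (measure_ne_top _ _)]
  rw [hatom, ← ENNReal.ofReal_toReal (measure_ne_top G (Iio q))]
  exact ofReal_add_unif01_mul ENNReal.toReal_nonneg (cdfLt_lowerQuantile_le hα)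
    (by rw [show (G (Iio q)).toReal = cdfLt G q from rfl, add_sub_cancel]
        exact le_cdfAt_lowerQuantile hα)

lemma pitAt_le_cdfAt (y : ℝ) {u : ℝ} (hu : u ≤ 1) : pitAt G y u ≤ cdfAt G y := by
  have := cdfLt_le_cdfAt (G := G) y
  rw [pitAt]
  nlinarith

lemma cdfLt_le_pitAt (y : ℝ) {u : ℝ} (hu : 0 ≤ u) : cdfLt G y ≤ pitAt G y u :=
  le_add_of_nonneg_right (mul_nonneg hu (sub_nonneg.mpr (cdfLt_le_cdfAt y)))

lemma cdfAt_le_cdfLt_of_lt {y y' : ℝ} (h : y < y') : cdfAt G y ≤ cdfLt G y' :=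
  ENNReal.toReal_mono (measure_ne_top _ _) (measure_mono (Iic_subset_Iio.mpr h))

lemma le_prod_unif01_pitAt_le (hα : α ∈ Ioo (0:ℝ) 1) :
    ENNReal.ofReal α ≤ (G.prod unif01) {p | pitAt G p.1 p.2 ≤ α} := by
  rw [Measure.prod_apply (measurableSet_le (measurable_pitAt G) measurable_const),
    ← measure_Iio_add_unif01_mul_measure_singleton (G := G) hα,
    ← lintegral_indicator_Iio_add_indicator_singleton]
  refine lintegral_mono fun y => ?_
  rcases lt_trichotomy y (lowerQuantile G α) with hy | rfl | hy
  · rw [indicator_of_mem (mem_Iio.mpr hy),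
      indicator_of_notMem (show y ∉ ({lowerQuantile G α} : Set ℝ) from hy.ne), Pi.one_apply,
      add_zero]
    refine unif01_Icc.symm.le.trans (measure_mono fun u hu => ?_)
    exact (pitAt_le_cdfAt y hu.2).trans (cdfAt_lt_of_lt_lowerQuantile hα hy).le
  · simp
  · simp [hy.ne', hy.le]

lemma prod_unif01_pitAt_lt_le (hα : α ∈ Ioo (0:ℝ) 1) :
    (G.prod unif01) {p | pitAt G p.1 p.2 < α} ≤ ENNReal.ofReal α := by
  rw [Measure.prod_apply (measurableSet_lt (measurable_pitAt G) measurable_const),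
    ← measure_Iio_add_unif01_mul_measure_singleton (G := G) hα,
    ← lintegral_indicator_Iio_add_indicator_singleton]
  refine lintegral_mono fun y => ?_
  rcases lt_trichotomy y (lowerQuantile G α) with hy | hy | hy
  · rw [indicator_of_mem (mem_Iio.mpr hy),
      indicator_of_notMem (show y ∉ ({lowerQuantile G α} : Set ℝ) from hy.ne), Pi.one_apply,
      add_zero]
    exact prob_le_one
  · rw [indicator_of_notMem (show y ∉ Iio (lowerQuantile G α) from hy.not_lt),
      indicator_of_mem (show y ∈ ({lowerQuantile G α} : Set ℝ) from hy), zero_add, hy]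
    exact measure_mono fun u (hu : pitAt G _ u < α) => hu.le
  · refine (measure_mono_null (fun u hu hu01 => ?_) unif01_compl_Icc).trans_le zero_le
    exact (lt_irrefl α) (((le_cdfAt_lowerQuantile hα).trans (cdfAt_le_cdfLt_of_lt hy)).trans
      (cdfLt_le_pitAt y hu01.1) |>.trans_lt hu)

theorem prod_unif01_pitAt_le (hα : α ∈ Ioo (0:ℝ) 1) :
    (G.prod unif01) {p | pitAt G p.1 p.2 ≤ α} = ENNReal.ofReal α := by
  refine le_antisymm (le_of_forall_gt_imp_ge_of_dense fun b hb => ?_) (le_prod_unif01_pitAt_le hα)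
  obtain ⟨β, -, hαβ, hβb⟩ := ENNReal.lt_iff_exists_real_btwn.mp hb
  refine le_trans ?_ hβb.le
  rcases lt_or_ge β 1 with hβ1 | hβ1
  · have hαβ' : α < β := (ENNReal.ofReal_lt_ofReal_iff'.mp hαβ).1
    exact (measure_mono fun (p : ℝ × ℝ) (hp : pitAt G p.1 p.2 ≤ α) =>
      show pitAt G p.1 p.2 < β from hp.trans_lt hαβ').trans
      (prod_unif01_pitAt_lt_le ⟨hα.1.trans hαβ', hβ1⟩)
  · exact prob_le_one.trans (ENNReal.one_le_ofReal.mpr hβ1)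

end PITOfFixedDistribution

/-- The tautological kernel `G ↦ G`, made Markov by the junk value `dirac 0` off probability
measures. -/
def evalKernel : Kernel (Measure ℝ) ℝ where
  toFun G := if G univ = 1 then G else Measure.dirac 0
  measurable' := Measurable.ite
    (Measure.measurable_coe MeasurableSet.univ (measurableSet_singleton 1))
    measurable_id measurable_const

lemma evalKernel_apply (G : Measure ℝ) [IsProbabilityMeasure G] : evalKernel G = G :=
  if_pos measure_univ

instance : IsMarkovKernel evalKernel where
  isProbabilityMeasure G := by
    by_cases h : G univ = 1
    · rw [show evalKernel G = G from if_pos h]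
      exact ⟨h⟩
    · rw [show evalKernel G = Measure.dirac 0 from if_neg h]
      infer_instance

section KernelCDF

variable {β : Type*} [MeasurableSpace β] (κ : Kernel β ℝ) [IsSFiniteKernel κ]

lemma measurable_cdfAt_kernel : Measurable fun p : β × ℝ => cdfAt (κ p.1) p.2 :=
  (Kernel.measurable_kernel_prodMk_left (κ := Kernel.prodMkRight ℝ κ)
    (measurableSet_le measurable_snd measurable_fst.snd)).ennreal_toReal

lemma measurable_cdfLt_kernel : Measurable fun p : β × ℝ => cdfLt (κ p.1) p.2 :=
  (Kernel.measurable_kernel_prodMk_left (κ := Kernel.prodMkRight ℝ κ)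
    (measurableSet_lt measurable_snd measurable_fst.snd)).ennreal_toReal

lemma measurable_pitAt_kernel : Measurable fun x : (β × ℝ) × ℝ => pitAt (κ x.1.1) x.1.2 x.2 :=
  ((measurable_cdfLt_kernel κ).comp measurable_fst).add (measurable_snd.mul
    (((measurable_cdfAt_kernel κ).comp measurable_fst).sub
      ((measurable_cdfLt_kernel κ).comp measurable_fst)))

end KernelCDF

section AutoCalibration

variable {μ : Measure Ω} [IsFiniteMeasure μ] {F : Ω → Measure ℝ} {Y : Ω → ℝ}

lemma setLIntegral_eq_measure_inter_of_autoCalibrated [∀ ω, IsFiniteMeasure (F ω)]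
    (hF : Measurable F) (hY : Measurable Y) (hac : AutoCalibrated μ F Y) {s : Set Ω}
    (hs : MeasurableSet[MeasurableSpace.comap F inferInstance] s) {t : Set ℝ}
    (ht : MeasurableSet t) :
    ∫⁻ ω in s, F ω t ∂μ = μ (s ∩ Y ⁻¹' t) := by
  have hlaw : (μ.restrict s).map Y = (μ.restrict s).bind F := by
    refine Measure.ext_of_Iic _ _ fun a => ?_
    have hYa : MeasurableSet {ω | Y ω ≤ a} := hY measurableSet_Iic
    rw [Measure.map_apply hY measurableSet_Iic,
      Measure.bind_apply measurableSet_Iic hF.aemeasurable,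
      Measure.restrict_apply (hY measurableSet_Iic)]
    calc μ (Y ⁻¹' Iic a ∩ s)
        = ENNReal.ofReal (∫ ω in s, {ω | Y ω ≤ a}.indicator (fun _ => (1:ℝ)) ω ∂μ) := by
          rw [setIntegral_indicator hYa, setIntegral_const, smul_eq_mul, mul_one, measureReal_def,
            ENNReal.ofReal_toReal (measure_ne_top _ _), inter_comm]
          rfl
      _ = ENNReal.ofReal (∫ ω in s, (μ[{ω | Y ω ≤ a}.indicator (fun _ => (1:ℝ)) |
            MeasurableSpace.comap F inferInstance]) ω ∂μ) := by
          rw [setIntegral_condExp hF.comap_le ((integrable_const 1).indicator hYa) hs]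
      _ = ∫⁻ ω in s, ENNReal.ofReal ((μ[{ω | Y ω ≤ a}.indicator (fun _ => (1:ℝ)) |
            MeasurableSpace.comap F inferInstance]) ω) ∂μ :=
          ofReal_integral_eq_lintegral_ofReal integrable_condExp.integrableOn
            (ae_restrict_of_ae (condExp_nonneg (ae_of_all _ fun ω => indicator_nonneg
              (fun _ _ => zero_le_one) ω)))
      _ = ∫⁻ ω in s, F ω (Iic a) ∂μ := by
          refine lintegral_congr_ae (ae_restrict_of_ae ((hac a).mono fun ω h => ?_))
          dsimp only at h ⊢
          rw [← h, cdfAt, ENNReal.ofReal_toReal (measure_ne_top _ _)]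
  have := congrArg (· t) hlaw
  rw [Measure.map_apply hY ht, Measure.bind_apply ht hF.aemeasurable,
    Measure.restrict_apply (hY ht)] at this
  rw [← this, inter_comm]

theorem map_prodMk_eq_compProd_evalKernel [∀ ω, IsProbabilityMeasure (F ω)] (hF : Measurable F)
    (hY : Measurable Y) (hac : AutoCalibrated μ F Y) :
    μ.map (fun ω => (F ω, Y ω)) = μ.map F ⊗ₘ evalKernel := by
  refine Measure.ext_prod fun {S t} hS ht => ?_
  rw [Measure.map_apply (hF.prodMk hY) (hS.prod ht), Measure.compProd_apply_prod hS ht,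
    setLIntegral_map hS (evalKernel.measurable_coe ht) hF, mk_preimage_prod]
  simp only [evalKernel_apply]
  exact (setLIntegral_eq_measure_inter_of_autoCalibrated hF hY hac ⟨S, hS, rfl⟩ ht).symm

end AutoCalibration

namespace IsPredictionSpace

variable {μ : Measure Ω} {F : Ω → Measure ℝ} {Y U : Ω → ℝ}

lemma map_eq_prod_unif01 (hps : IsPredictionSpace μ F Y U) :
    μ.map (fun ω => ((F ω, Y ω), U ω)) = (μ.map fun ω => (F ω, Y ω)).prod unif01 := by
  have := hps.isProb
  have hindep : IndepFun (fun ω => (F ω, Y ω)) U μ := by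
    rw [IndepFun_iff_Indep]
    exact MeasurableSpace.comap_prodMk F Y ▸ hps.indepU.symm
  rw [(indepFun_iff_map_prod_eq_prod_map_map (hps.measF.prodMk hps.measY).aemeasurable
    hps.measU.aemeasurable).mp hindep, hps.unifU]

lemma PIT_eq (hps : IsPredictionSpace μ F Y U) :
    PIT F Y U = fun ω => pitAt (evalKernel (F ω)) (Y ω) (U ω) := by
  funext ω
  have := hps.probF ω
  rw [evalKernel_apply]
  rfl

lemma measurable_PIT (hps : IsPredictionSpace μ F Y U) : Measurable (PIT F Y U) := by
  rw [hps.PIT_eq]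
  exact (measurable_pitAt_kernel evalKernel).comp (f := fun ω => ((F ω, Y ω), U ω))
    ((hps.measF.prodMk hps.measY).prodMk hps.measU)


theorem measure_inter_PIT_le (hps : IsPredictionSpace μ F Y U) (hac : AutoCalibrated μ F Y)
    {α : ℝ} (hα : α ∈ Ioo (0:ℝ) 1) {s : Set Ω}
    (hs : MeasurableSet[MeasurableSpace.comap F inferInstance] s) :
    μ (s ∩ {ω | PIT F Y U ω ≤ α}) = ENNReal.ofReal α * μ s := by
  obtain ⟨T, hT, rfl⟩ := hs
  have := hps.isProb
  have := hps.probF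
  set W : Set ((Measure ℝ × ℝ) × ℝ) := {x | x.1.1 ∈ T ∧ pitAt (evalKernel x.1.1) x.1.2 x.2 ≤ α}
  have hW : MeasurableSet W := (measurable_fst.fst hT).inter
    (measurableSet_le (measurable_pitAt_kernel evalKernel) measurable_const)
  have hpre : (fun ω => ((F ω, Y ω), U ω)) ⁻¹' W = F ⁻¹' T ∩ {ω | PIT F Y U ω ≤ α} := by
    rw [hps.PIT_eq]
    rfl
  have hslice (G : Measure ℝ) : ∫⁻ y, unif01 (Prod.mk (G, y) ⁻¹' W) ∂evalKernel G
      = T.indicator (fun _ => ENNReal.ofReal α) G := by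
    by_cases hG : G ∈ T
    · rw [indicator_of_mem hG, ← prod_unif01_pitAt_le (G := evalKernel G) hα,
        Measure.prod_apply (measurableSet_le (measurable_pitAt _) measurable_const)]
      simp [W, hG]
    · simp [W, hG]
  calc μ (F ⁻¹' T ∩ {ω | PIT F Y U ω ≤ α})
      = ((μ.map F ⊗ₘ evalKernel).prod unif01) W := by
        rw [← map_prodMk_eq_compProd_evalKernel hps.measF hps.measY hac, ← hps.map_eq_prod_unif01,
          Measure.map_apply ((hps.measF.prodMk hps.measY).prodMk hps.measU) hW, hpre]
    _ = ∫⁻ G, ∫⁻ y, unif01 (Prod.mk (G, y) ⁻¹' W) ∂evalKernel G ∂μ.map F := by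
        rw [Measure.prod_apply hW, Measure.lintegral_compProd (measurable_measure_prodMk_left hW)]
    _ = ENNReal.ofReal α * μ (F ⁻¹' T) := by
        simp_rw [hslice]
        rw [lintegral_indicator_const hT, Measure.map_apply hps.measF hT]

end IsPredictionSpace

lemma condExp_indicator_ae_eq_const {Ω : Type*} {m m₀ : MeasurableSpace Ω} {μ : Measure Ω}
    [IsFiniteMeasure μ] (hm : m ≤ m₀) {A : Set Ω} (hA : MeasurableSet A) {c : ℝ} (hc : 0 ≤ c)
    (h : ∀ s, MeasurableSet[m] s → μ (s ∩ A) = ENNReal.ofReal c * μ s) :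
    μ[A.indicator (fun _ => (1:ℝ)) | m] =ᵐ[μ] fun _ => c := by
  refine (ae_eq_condExp_of_forall_setIntegral_eq hm ((integrable_const 1).indicator hA)
    (fun _ _ _ => integrableOn_const) (fun s hs _ => ?_)
    stronglyMeasurable_const.aestronglyMeasurable).symm
  rw [setIntegral_indicator hA, setIntegral_const, setIntegral_const, measureReal_def,
    measureReal_def, h s hs, ENNReal.toReal_mul, ENNReal.toReal_ofReal hc, smul_eq_mul,
    smul_eq_mul, mul_one, mul_comm]

theorem auto_implies_cep_general
    {Ω : Type*} [MeasurableSpace Ω] (μ : Measure Ω) (F : Ω → Measure ℝ) (Y U : Ω → ℝ)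
    (hps : IsPredictionSpace μ F Y U)
    (hac : AutoCalibrated μ F Y) :
    CEPCalibrated μ F Y U := by
  intro α hα
  have := hps.isProb
  have := hps.probF
  have hq : Measurable[MeasurableSpace.comap F inferInstance] fun ω => lowerQuantile (F ω) α :=
    measurable_lowerQuantile_comp (comap_measurable F) hα
  exact condExp_indicator_ae_eq_const (hq.comap_le.trans hps.measF.comap_le)
    (measurableSet_le hps.measurable_PIT measurable_const) hα.1.le
    fun s hs => hps.measure_inter_PIT_le hac hα (hq.comap_le s hs)

/-- **Theorem (Statement 3).** In a prediction space, assume that for every `α ∈ (0,1)` the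
lower quantile `q_α^-(F)` is measurable (so that a regular conditional distribution of `Y`
given `q_α^-(F)` exists).  If `F` is auto-calibrated, then `F` is CEP calibrated. -/
theorem auto_implies_cep
    {Ω : Type*} [MeasurableSpace Ω] (μ : Measure Ω) (F : Ω → Measure ℝ) (Y U : Ω → ℝ)
    (hps : IsPredictionSpace μ F Y U)
    (hqmeas : ∀ α ∈ Set.Ioo (0:ℝ) 1, Measurable (fun ω => lowerQuantile (F ω) α))
    (hac : AutoCalibrated μ F Y) :
    CEPCalibrated μ F Y U :=
  auto_implies_cep_general μ F Y U hps hac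

end
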